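/- Let H be a two-dimensional real inner product space, J : H → H a linear isometry satisfying J ∘ J = -id, and A a symmetric bilinear form on H satisfying A(JX, JY) = -A(X, Y) for all X, Y ∈ H. If v ∈ H is a nonzero vector with A(v, v) = 0 and A(v, Jv) ≤ 0, then for every orthonormal basis (e₁, e₂) of H one has ‖v‖² · √( Σ_{i,j=1}^{2} A(eᵢ, eⱼ)² ) = -√2 · A(v, Jv). -/

import Mathlib

/-!
The quantity `∑ i j, A (b i) (b j) ^ 2` does not depend on the orthonormal basis `b`: for each
fixed first argument, `∑ j, f (b j) ^ 2` is the squared norm of the Riesz representative of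
the functional `f`. So it may be computed in the orthonormal basis `(u, J u)`, `u = v / ‖v‖`.
There `A (J u) (J u) = -A u u = 0` and `A (J u) u = A u (J u)`, so the sum is `2 A(u, J u)²`,
and `A(u, J u) = A(v, J v) / ‖v‖² ≤ 0`.
-/

open scoped RealInnerProductSpace

section HilbertSchmidt

variable {H ι κ : Type*} [NormedAddCommGroup H] [InnerProductSpace ℝ H] [Fintype ι] [Fintype κ]

theorem OrthonormalBasis.exists_inner_eq_apply (b : OrthonormalBasis ι ℝ H) (f : H →ₗ[ℝ] ℝ) :
    ∃ w : H, ∀ x, f x = ⟪w, x⟫ := by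
  refine ⟨∑ i, f (b i) • b i, fun x => ?_⟩
  conv_lhs => rw [← b.sum_repr' x]
  simp only [map_sum, map_smul, smul_eq_mul, sum_inner, real_inner_smul_left, mul_comm]

theorem OrthonormalBasis.sum_sq_apply_eq (b : OrthonormalBasis ι ℝ H)
    (e : OrthonormalBasis κ ℝ H) (f : H →ₗ[ℝ] ℝ) : ∑ i, f (b i) ^ 2 = ∑ k, f (e k) ^ 2 := by
  obtain ⟨w, hw⟩ := b.exists_inner_eq_apply f
  simp only [hw, sum_sq_inner_left]

theorem OrthonormalBasis.sum_sum_sq_apply_apply_eq (A : H →ₗ[ℝ] H →ₗ[ℝ] ℝ)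
    (b : OrthonormalBasis ι ℝ H) (e : OrthonormalBasis κ ℝ H) :
    ∑ i, ∑ j, A (b i) (b j) ^ 2 = ∑ k, ∑ l, A (e k) (e l) ^ 2 :=
  calc ∑ i, ∑ j, A (b i) (b j) ^ 2
      = ∑ i, ∑ l, A.flip (e l) (b i) ^ 2 := by
        congr! 1 with i
        exact b.sum_sq_apply_eq e (A (b i))
    _ = ∑ l, ∑ k, A.flip (e l) (e k) ^ 2 := by
        rw [Finset.sum_comm]
        congr! 1 with l
        exact b.sum_sq_apply_eq e (A.flip (e l))
    _ = ∑ k, ∑ l, A (e k) (e l) ^ 2 := Finset.sum_comm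

end HilbertSchmidt

theorem Orthonormal.exists_orthonormalBasis_coe_eq {H ι : Type*} [NormedAddCommGroup H]
    [InnerProductSpace ℝ H] [Fintype ι] [Nonempty ι] {v : ι → H} (hv : Orthonormal ℝ v)
    (hcard : Fintype.card ι = Module.finrank ℝ H) : ∃ e : OrthonormalBasis ι ℝ H, ⇑e = v :=
  ⟨(basisOfOrthonormalOfCardEqFinrank hv hcard).toOrthonormalBasis
      (by rwa [coe_basisOfOrthonormalOfCardEqFinrank]),
    by simp⟩

section ComplexStructure

variable {H : Type*} [NormedAddCommGroup H] [InnerProductSpace ℝ H] {J : H →ₗ[ℝ] H}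

theorem inner_map_self_eq_zero_of_map_map_eq_neg (hJiso : ∀ x : H, ‖J x‖ = ‖x‖)
    (hJJ : ∀ x : H, J (J x) = -x) (x : H) : ⟪x, J x⟫ = 0 := by
  have h := (⟨J, hJiso⟩ : H →ₗᵢ[ℝ] H).inner_map_map x (J x)
  simp only [LinearIsometry.coe_mk, hJJ, inner_neg_right, real_inner_comm x] at h
  linarith

theorem orthonormal_pair_map (hJiso : ∀ x : H, ‖J x‖ = ‖x‖) (hJJ : ∀ x : H, J (J x) = -x)
    {u : H} (hu : ‖u‖ = 1) : Orthonormal ℝ ![u, J u] := by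
  have hJu : ⟪u, J u⟫ = 0 := inner_map_self_eq_zero_of_map_map_eq_neg hJiso hJJ u
  rw [orthonormal_iff_ite]
  intro i j
  fin_cases i <;> fin_cases j <;> simp [hJiso, hu, hJu, real_inner_comm u]

variable {A : H →ₗ[ℝ] H →ₗ[ℝ] ℝ}

theorem apply_map_eq_apply_map (hJJ : ∀ x : H, J (J x) = -x)
    (hAJ : ∀ X Y : H, A (J X) (J Y) = - A X Y) (x y : H) : A (J x) y = A x (J y) := by
  simpa [hJJ] using hAJ x (J y)

theorem sum_sum_sq_apply_pair_map (hJJ : ∀ x : H, J (J x) = -x)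
    (hAJ : ∀ X Y : H, A (J X) (J Y) = - A X Y) {u : H} (hAu : A u u = 0) :
    ∑ k, ∑ l, A (![u, J u] k) (![u, J u] l) ^ 2 = 2 * A u (J u) ^ 2 := by
  simp only [Fin.sum_univ_two, Matrix.cons_val_zero, Matrix.cons_val_one, hAJ, hAu,
    apply_map_eq_apply_map hJJ hAJ u u]
  ring

end ComplexStructure

theorem stmt5_general {H : Type*} [NormedAddCommGroup H] [InnerProductSpace ℝ H]
    (J : H →ₗ[ℝ] H) (hJiso : ∀ x : H, ‖J x‖ = ‖x‖) (hJJ : ∀ x : H, J (J x) = -x)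
    (A : H →ₗ[ℝ] H →ₗ[ℝ] ℝ)
    (hAJ : ∀ X Y : H, A (J X) (J Y) = - A X Y)
    (v : H) (hv : v ≠ 0) (hAv : A v v = 0) (hAvJv : A v (J v) ≤ 0)
    (b : OrthonormalBasis (Fin 2) ℝ H) :
    ‖v‖ ^ 2 * Real.sqrt (∑ i : Fin 2, ∑ j : Fin 2, (A (b i) (b j)) ^ 2) =
      - Real.sqrt 2 * A v (J v) := by
  set u : H := ‖v‖⁻¹ • v
  have hu : ‖u‖ = 1 := norm_smul_inv_norm (𝕜 := ℝ) hv
  obtain ⟨e, he⟩ := (orthonormal_pair_map hJiso hJJ hu).exists_orthonormalBasis_coe_eq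
    (Module.finrank_eq_card_basis b.toBasis).symm
  have hAu : A u u = 0 := by simp [u, hAv]
  have hAuJu : A u (J u) = A v (J v) / ‖v‖ ^ 2 := by
    simp only [u, map_smul, LinearMap.smul_apply, smul_eq_mul]
    field_simp
  have hAuJu_nonpos : A u (J u) ≤ 0 := hAuJu ▸ div_nonpos_of_nonpos_of_nonneg hAvJv (by positivity)
  rw [b.sum_sum_sq_apply_apply_eq A e, he, sum_sum_sq_apply_pair_map hJJ hAJ hAu,
    Real.sqrt_mul zero_le_two, Real.sqrt_sq_eq_abs, abs_of_nonpos hAuJu_nonpos, hAuJu]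
  field_simp

/-- On a two-dimensional real inner product space `H` with a compatible complex
structure `J` and a symmetric bilinear form `A` of type (2,0)+(0,2), if `v ≠ 0`,
`A(v,v) = 0` and `A(v, Jv) ≤ 0`, then `‖v‖² |A| = -√2 A(v, Jv)`, where
`|A| = √(Σ_{i,j} A(eᵢ, eⱼ)²)` for any orthonormal basis `(e₁, e₂)`. -/
theorem stmt5 {H : Type*} [NormedAddCommGroup H] [InnerProductSpace ℝ H]
    (hdim : Module.finrank ℝ H = 2)
    (J : H →ₗ[ℝ] H) (hJiso : ∀ x : H, ‖J x‖ = ‖x‖) (hJJ : ∀ x : H, J (J x) = -x)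
    (A : H →ₗ[ℝ] H →ₗ[ℝ] ℝ) (hAsym : ∀ X Y : H, A X Y = A Y X)
    (hAJ : ∀ X Y : H, A (J X) (J Y) = - A X Y)
    (v : H) (hv : v ≠ 0) (hAv : A v v = 0) (hAvJv : A v (J v) ≤ 0)
    (b : OrthonormalBasis (Fin 2) ℝ H) :
    ‖v‖ ^ 2 * Real.sqrt (∑ i : Fin 2, ∑ j : Fin 2, (A (b i) (b j)) ^ 2) =
      - Real.sqrt 2 * A v (J v) :=
  stmt5_general J hJiso hJJ A hAJ v hv hAv hAvJv b
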